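/- In a recollement of abelian categories, for any object L of A with i^*L = 0 and i^!L = 0, one has j_{!*}(j^* L) ≅ L. Hence j_{!*} gives an equivalence between A'' and the full subcategory of A consisting of objects L with i^*L = 0 and i^!L = 0, with inverse j^*. -/

import Mathlib

open CategoryTheory CategoryTheory.Limits

universe v u₁ u₂ u₃

/-- A recollement of abelian categories: six additive functors
`i^* ⊣ i_* ⊣ i^!` and `j_! ⊣ j^* ⊣ j_*` satisfying the axioms (R1)-(R3)
(and the exact sequences of natural transformations (R5)). -/
structure Recollement (A₁ : Type u₁) (A : Type u₂) (A₂ : Type u₃)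
    [Category.{v} A₁] [Category.{v} A] [Category.{v} A₂]
    [Abelian A₁] [Abelian A] [Abelian A₂] where
  /-- the functor `i^* : A ⥤ A'` -/
  iStar : A ⥤ A₁
  /-- the functor `i_* : A' ⥤ A` -/
  iLow : A₁ ⥤ A
  /-- the functor `i^! : A ⥤ A'` -/
  iShriek : A ⥤ A₁
  /-- the functor `j_! : A'' ⥤ A` -/
  jShriek : A₂ ⥤ A
  /-- the functor `j^* : A ⥤ A''` -/
  jStar : A ⥤ A₂
  /-- the functor `j_* : A'' ⥤ A` -/
  jLow : A₂ ⥤ A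
  iStar_additive : iStar.Additive
  iLow_additive : iLow.Additive
  iShriek_additive : iShriek.Additive
  jShriek_additive : jShriek.Additive
  jStar_additive : jStar.Additive
  jLow_additive : jLow.Additive
  /-- `i^* ⊣ i_*` -/
  adj₁ : iStar ⊣ iLow
  /-- `i_* ⊣ i^!` -/
  adj₂ : iLow ⊣ iShriek
  /-- `j_! ⊣ j^*` -/
  adj₃ : jShriek ⊣ jStar
  /-- `j^* ⊣ j_*` -/
  adj₄ : jStar ⊣ jLow
  /-- the adjunction morphism `i^* i_* → Id` is an isomorphism -/
  counit₁_iso : IsIso adj₁.counit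
  /-- the adjunction morphism `Id → i^! i_*` is an isomorphism -/
  unit₂_iso : IsIso adj₂.unit
  /-- the adjunction morphism `Id → j^* j_!` is an isomorphism -/
  unit₃_iso : IsIso adj₃.unit
  /-- the adjunction morphism `j^* j_* → Id` is an isomorphism -/
  counit₄_iso : IsIso adj₄.counit
  iLow_faithful : iLow.Faithful
  iLow_full : iLow.Full
  /-- `j^* i_* = 0` -/
  jStar_iLow_zero : ∀ X : A₁, IsZero (jStar.obj (iLow.obj X))
  /-- `i_*` embeds `A'` onto the full subcategory of objects annihilated by `j^*` -/
  essImage : ∀ L : A, IsZero (jStar.obj L) → ∃ X : A₁, Nonempty (iLow.obj X ≅ L)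
  comp₁ : ∀ L : A, adj₃.counit.app L ≫ adj₁.unit.app L = 0
  /-- exactness of `j_! j^* → Id → i_* i^*` -/
  exact₁ : ∀ L : A, (ShortComplex.mk (adj₃.counit.app L) (adj₁.unit.app L) (comp₁ L)).Exact
  /-- `Id → i_* i^*` is an epimorphism -/
  epi₁ : ∀ L : A, Epi (adj₁.unit.app L)
  comp₂ : ∀ L : A, adj₂.counit.app L ≫ adj₄.unit.app L = 0
  /-- exactness of `i_* i^! → Id → j_* j^*` -/
  exact₂ : ∀ L : A, (ShortComplex.mk (adj₂.counit.app L) (adj₄.unit.app L) (comp₂ L)).Exact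
  /-- `i_* i^! → Id` is a monomorphism -/
  mono₂ : ∀ L : A, Mono (adj₂.counit.app L)

variable {A₁ : Type u₁} {A : Type u₂} {A₂ : Type u₃}
  [Category.{v} A₁] [Category.{v} A] [Category.{v} A₂]
  [Abelian A₁] [Abelian A] [Abelian A₂]


/-- The canonical map `N_X : j_! X ⟶ j_* X` corresponding to the identity of `X`
under `Hom_A(j_! X, j_* X) ≅ Hom_{A''}(X, j^* j_* X) ≅ Hom_{A''}(X, X)`. -/
noncomputable def Recollement.N (R : Recollement A₁ A A₂) (X : A₂) :
    R.jShriek.obj X ⟶ R.jLow.obj X :=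
  haveI := R.counit₄_iso
  (R.adj₃.homEquiv X (R.jLow.obj X)).symm (inv (R.adj₄.counit.app X))

/-- The intermediate extension functor `j_{!*}`, on objects: the image of `N_X`. -/
noncomputable def Recollement.jMid (R : Recollement A₁ A A₂) (X : A₂) : A :=
  Limits.image (R.N X)

/-!
The image `j_{!*} X` of `N_X : j_! X → j_* X` is a quotient of `j_! X` and a subobject of `j_* X`.
Since `i^*` is right exact and kills `j_! X`, and `i^!` is left exact and kills `j_* X`, both
vanish on `j_{!*} X`; since `j^*` is exact and `j^* N_X` is invertible, `j^* j_{!*} X ≅ X`.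
Conversely, for `L` with `i^* L = 0 = i^! L`, the recollement sequences make `σ_L : j_! j^* L → L`
epi and `η_L : L → j_* j^* L` mono, so `N_{j^* L} = σ_L ≫ η_L` is an epi-mono factorisation
through `L`, whence `j_{!*} j^* L ≅ L`.
-/

namespace CategoryTheory.Functor

variable {C D : Type*} [Category C] [Category D] (F : C ⥤ D) {X Y : C} (f : X ⟶ Y) [HasImage f]

lemma isZero_obj_image_of_isZero_obj_src [HasEqualizers C] [HasZeroMorphisms D]
    [F.PreservesEpimorphisms] (h : IsZero (F.obj X)) : IsZero (F.obj (image f)) :=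
  IsZero.of_epi_eq_zero (F.map (factorThruImage f)) (h.eq_zero_of_src _)

lemma isZero_obj_image_of_isZero_obj_tgt [HasZeroMorphisms D] [F.PreservesMonomorphisms]
    (h : IsZero (F.obj Y)) : IsZero (F.obj (image f)) :=
  IsZero.of_mono_eq_zero (F.map (image.ι f)) (h.eq_zero_of_tgt _)

lemma isIso_map_factorThruImage [HasEqualizers C] [Balanced D] [F.PreservesEpimorphisms]
    [IsIso (F.map f)] : IsIso (F.map (factorThruImage f)) := by
  have : Mono (F.map (factorThruImage f) ≫ F.map (image.ι f)) := by
    rw [← F.map_comp, image.fac]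
    infer_instance
  have : Mono (F.map (factorThruImage f)) := mono_of_mono _ (F.map (image.ι f))
  exact isIso_of_mono_of_epi _

end CategoryTheory.Functor

namespace Recollement

variable (R : Recollement A₁ A A₂)

attribute [local instance] iLow_additive counit₄_iso unit₃_iso

instance : R.iStar.PreservesEpimorphisms := Functor.preservesEpimorphisms_of_adjunction R.adj₁

instance : R.iShriek.PreservesMonomorphisms := Functor.preservesMonomorphisms_of_adjunction R.adj₂

instance : R.jStar.PreservesEpimorphisms := Functor.preservesEpimorphisms_of_adjunction R.adj₄

lemma N_jStar_obj (L : A) :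
    R.N (R.jStar.obj L) = R.adj₃.counit.app L ≫ R.adj₄.unit.app L := by
  have hinv : R.jStar.map (R.adj₄.unit.app L) = inv (R.adj₄.counit.app (R.jStar.obj L)) :=
    IsIso.eq_inv_of_inv_hom_id (R.adj₄.left_triangle_components L)
  rw [N, Adjunction.homEquiv_counit, ← hinv]
  exact R.adj₃.counit.naturality (R.adj₄.unit.app L)

lemma unit₃_app_comp_jStar_map_N (X : A₂) :
    R.adj₃.unit.app X ≫ R.jStar.map (R.N X) = inv (R.adj₄.counit.app X) :=
  (R.adj₃.homEquiv_unit _ _ _).symm.trans (Equiv.apply_symm_apply _ _)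

instance (X : A₂) : IsIso (R.jStar.map (R.N X)) := by
  have : IsIso (R.adj₃.unit.app X ≫ R.jStar.map (R.N X)) := by
    rw [unit₃_app_comp_jStar_map_N]
    infer_instance
  exact IsIso.of_isIso_comp_left (R.adj₃.unit.app X) _

lemma epi_counit₃_app_of_isZero_iStar {L : A} (h : IsZero (R.iStar.obj L)) :
    Epi (R.adj₃.counit.app L) :=
  (R.exact₁ L).epi_f ((R.iLow.map_isZero h).eq_zero_of_tgt _)

lemma mono_unit₄_app_of_isZero_iShriek {L : A} (h : IsZero (R.iShriek.obj L)) :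
    Mono (R.adj₄.unit.app L) :=
  (R.exact₂ L).mono_g ((R.iLow.map_isZero h).eq_zero_of_src _)

lemma isZero_iStar_obj_jShriek_obj (X : A₂) : IsZero (R.iStar.obj (R.jShriek.obj X)) := by
  rw [IsZero.iff_id_eq_zero]
  apply (R.adj₁.homEquiv _ _).injective
  apply (R.adj₃.homEquiv _ _).injective
  exact (R.jStar_iLow_zero _).eq_of_tgt _ _

lemma isZero_iShriek_obj_jLow_obj (X : A₂) : IsZero (R.iShriek.obj (R.jLow.obj X)) := by
  rw [IsZero.iff_id_eq_zero]
  apply (R.adj₂.homEquiv _ _).symm.injective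
  apply (R.adj₄.homEquiv _ _).symm.injective
  exact (R.jStar_iLow_zero _).eq_of_src _ _

lemma isZero_iStar_obj_jMid (X : A₂) : IsZero (R.iStar.obj (R.jMid X)) :=
  R.iStar.isZero_obj_image_of_isZero_obj_src (R.N X) (R.isZero_iStar_obj_jShriek_obj X)

lemma isZero_iShriek_obj_jMid (X : A₂) : IsZero (R.iShriek.obj (R.jMid X)) :=
  R.iShriek.isZero_obj_image_of_isZero_obj_tgt (R.N X) (R.isZero_iShriek_obj_jLow_obj X)

noncomputable def jStarObjJMidIso (X : A₂) : R.jStar.obj (R.jMid X) ≅ X :=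
  have := R.jStar.isIso_map_factorThruImage (R.N X)
  (asIso (R.jStar.map (factorThruImage (R.N X)))).symm ≪≫ (asIso (R.adj₃.unit.app X)).symm

noncomputable def jMidJStarObjIso {L : A} (h₁ : IsZero (R.iStar.obj L))
    (h₂ : IsZero (R.iShriek.obj L)) : R.jMid (R.jStar.obj L) ≅ L :=
  have := R.epi_counit₃_app_of_isZero_iStar h₁
  have := R.mono_unit₄_app_of_isZero_iShriek h₂
  have : StrongEpi (R.adj₃.counit.app L) := strongEpi_of_epi _
  (image.isoStrongEpiMono _ _ (R.N_jStar_obj L).symm).symm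

end Recollement

/-- For `L` with `i^* L = 0 = i^! L` one has `j_{!*}(j^* L) ≅ L`; moreover `j_{!*}`
lands in the full subcategory of such objects and `j^* ∘ j_{!*} ≅ Id`, so `j_{!*}`
is an equivalence of `A''` with that subcategory, with inverse `j^*`. -/
theorem stmt6 (R : Recollement A₁ A A₂) :
    (∀ L : A, IsZero (R.iStar.obj L) → IsZero (R.iShriek.obj L) →
      Nonempty (R.jMid (R.jStar.obj L) ≅ L)) ∧
    (∀ X : A₂, IsZero (R.iStar.obj (R.jMid X)) ∧ IsZero (R.iShriek.obj (R.jMid X)) ∧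
      Nonempty (R.jStar.obj (R.jMid X) ≅ X)) :=
  ⟨fun _ h₁ h₂ => ⟨R.jMidJStarObjIso h₁ h₂⟩,
    fun X => ⟨R.isZero_iStar_obj_jMid X, R.isZero_iShriek_obj_jMid X, ⟨R.jStarObjJMidIso X⟩⟩⟩
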